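/- arXiv:2003.08862 — 3 statements merged into one kernel-verified Lean document; each statement's English description precedes it below -/
import Mathlib

section
/- Let A, B > 0. Set s := √(A² + B²), ξ_{E₁} := 2(B + s), and Q := -2iA² + A(ξ_{E₁} - 12B) + 2iB(4B - ξ_{E₁}) ∈ ℂ. Then Im(Q² · (B - iA)) = 16·(4AB³(s - B) + A³B(3s - 5B)), and this quantity is strictly positive. -/
/-!
Write `Q = x + i y`. Then `Im(Q² (B - iA)) = 2xyB - A(x² - y²)`, a polynomial in `A`, `B`, `s`;
reducing it with `s² = A² + B²` gives the stated expression, which factors as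
`16 A B (s - B)² (3s + B)`. Since `s > B > 0`, every factor is positive.
-/

open Complex

lemma Complex.im_sq_mul (z w : ℂ) :
    (z ^ 2 * w).im = (z.re ^ 2 - z.im ^ 2) * w.im + 2 * z.re * z.im * w.re := by
  simp only [sq, mul_im, mul_re]
  ring

def Q (A B ξ : ℝ) : ℂ :=
  -2 * I * (A : ℂ) ^ 2 + (A : ℂ) * ((ξ : ℂ) - 12 * (B : ℂ))
    + 2 * I * (B : ℂ) * (4 * (B : ℂ) - (ξ : ℂ))

lemma Q_re (A B ξ : ℝ) : (Q A B ξ).re = A * (ξ - 12 * B) := by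
  simp [Q, ← ofReal_pow]

lemma Q_im (A B ξ : ℝ) : (Q A B ξ).im = -2 * A ^ 2 + 2 * B * (4 * B - ξ) := by
  simp [Q, ← ofReal_pow]

lemma im_Q_sq_mul_conj {A B s : ℝ} (hs : s ^ 2 = A ^ 2 + B ^ 2) :
    (Q A B (2 * (B + s)) ^ 2 * ((B : ℂ) - I * (A : ℂ))).im
      = 16 * (4 * A * B ^ 3 * (s - B) + A ^ 3 * B * (3 * s - 5 * B)) := by
  rw [Complex.im_sq_mul, Q_re, Q_im]
  simp only [sub_re, sub_im, mul_re, mul_im, I_re, I_im, ofReal_re, ofReal_im]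
  linear_combination (-4 * A ^ 3) * hs

lemma im_formula_factor {A B s : ℝ} (hs : s ^ 2 = A ^ 2 + B ^ 2) :
    4 * A * B ^ 3 * (s - B) + A ^ 3 * B * (3 * s - 5 * B)
      = A * B * (s - B) ^ 2 * (3 * s + B) := by
  linear_combination (-3 * A * B * s + 5 * A * B ^ 2) * hs

lemma lt_sqrt_sq_add_sq {A : ℝ} (hA : 0 < A) (B : ℝ) : B < Real.sqrt (A ^ 2 + B ^ 2) :=
  Real.lt_sqrt_of_sq_lt (by nlinarith)

/-- Positivity of `Im(Q(ξ_{E₁})² Ē₂)`, which implies `q₁(ξ_{E₁}) ≠ 0` and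
`q₂(ξ_{E₁}) ≠ 0`. -/
theorem stmt_12 (A B : ℝ) (hA : 0 < A) (hB : 0 < B) :
    let s : ℝ := Real.sqrt (A^2 + B^2)
    let ξ : ℝ := 2 * (B + s)
    let Q : ℂ := -2 * Complex.I * (A:ℂ)^2 + (A:ℂ) * ((ξ:ℂ) - 12 * (B:ℂ))
      + 2 * Complex.I * (B:ℂ) * (4 * (B:ℂ) - (ξ:ℂ))
    (Q^2 * ((B:ℂ) - Complex.I * (A:ℂ))).im
        = 16 * (4 * A * B^3 * (s - B) + A^3 * B * (3 * s - 5 * B)) ∧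
    0 < (Q^2 * ((B:ℂ) - Complex.I * (A:ℂ))).im := by
  intro s ξ Q
  have hs : s ^ 2 = A ^ 2 + B ^ 2 := Real.sq_sqrt (by positivity)
  have hsB : 0 < s - B := sub_pos.mpr (lt_sqrt_sq_add_sq hA B)
  have him : (Q ^ 2 * ((B : ℂ) - I * (A : ℂ))).im
      = 16 * (4 * A * B ^ 3 * (s - B) + A ^ 3 * B * (3 * s - 5 * B)) :=
    im_Q_sq_mul_conj hs
  refine ⟨him, ?_⟩
  rw [him, im_formula_factor hs]
  positivity
end

section
/- Let A, B > 0 and s := √(A² + B²). The complex number c₁ := 2B(-B + iA)/(A² + 4iAB - 3B² - Bs) has strictly positive real part and strictly positive imaginary part. Moreover, Re(c₁)·|D|² = 2B²(3A² + 3B² + Bs) and Im(c₁)·|D|² = 2ABs(s - B), where D := A² + 4iAB - 3B² - Bs. -/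
/-!
Write `c₁ = N / D` with `N = 2B(-B + iA)`. Multiplying by `|D|² = D * conj D` turns `Re c₁` and
`Im c₁` into the real and imaginary parts of `N * conj D`, polynomial in `A`, `B`, `s`; with
`s² = A² + B²` these are the two stated right-hand sides. Both are positive because `s > B`,
and `D ≠ 0` since `Im D = 4AB > 0`, so the signs of `Re c₁` and `Im c₁` follow.
-/

namespace Complex

theorem div_re_mul_sq_norm (z w : ℂ) : (z / w).re * ‖w‖ ^ 2 = z.re * w.re + z.im * w.im := by
  rcases eq_or_ne w 0 with rfl | hw
  · simp
  · rw [div_re, ← add_div, Complex.sq_norm, div_mul_cancel₀ _ (normSq_pos.mpr hw).ne']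

theorem div_im_mul_sq_norm (z w : ℂ) : (z / w).im * ‖w‖ ^ 2 = z.im * w.re - z.re * w.im := by
  rcases eq_or_ne w 0 with rfl | hw
  · simp
  · rw [div_im, div_sub_div_same, Complex.sq_norm, div_mul_cancel₀ _ (normSq_pos.mpr hw).ne']

end Complex

/-- The coefficient `c₁ = 2B E₁/(A² + 4iAB - 3B² - B|E₂|)` has strictly positive
real and imaginary parts, with explicit formulas. -/
theorem stmt_14 (A B : ℝ) (hA : 0 < A) (hB : 0 < B) :
    let s : ℝ := Real.sqrt (A^2 + B^2)
    let D : ℂ := (A:ℂ)^2 + 4 * Complex.I * (A:ℂ) * (B:ℂ) - 3 * (B:ℂ)^2 - (B:ℂ) * (s:ℂ)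
    let c₁ : ℂ := 2 * (B:ℂ) * (-(B:ℂ) + Complex.I * (A:ℂ)) / D
    0 < c₁.re ∧ 0 < c₁.im ∧
    c₁.re * ‖D‖^2 = 2 * B^2 * (3 * A^2 + 3 * B^2 + B * s) ∧
    c₁.im * ‖D‖^2 = 2 * A * B * s * (s - B) := by
  intro s D c₁
  have hs_sq : s ^ 2 = A ^ 2 + B ^ 2 := Real.sq_sqrt (by positivity)
  have hB_lt_s : B < s := (Real.lt_sqrt hB.le).mpr (by nlinarith)
  have hN_re : (2 * (B:ℂ) * (-(B:ℂ) + Complex.I * (A:ℂ))).re = -2 * B ^ 2 := by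
    simp; ring
  have hN_im : (2 * (B:ℂ) * (-(B:ℂ) + Complex.I * (A:ℂ))).im = 2 * A * B := by
    simp; ring
  have hD_re : D.re = A ^ 2 - 3 * B ^ 2 - B * s := by simp [D, pow_two]
  have hD_im : D.im = 4 * A * B := by simp [D, pow_two]
  have hD_norm : 0 < ‖D‖ ^ 2 := by
    have hD : D ≠ 0 := fun h => by
      rw [h, Complex.zero_im] at hD_im; nlinarith [mul_pos hA hB]
    positivity
  have hre : c₁.re * ‖D‖ ^ 2 = 2 * B ^ 2 * (3 * A ^ 2 + 3 * B ^ 2 + B * s) := by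
    rw [Complex.div_re_mul_sq_norm, hN_re, hN_im, hD_re, hD_im]
    ring
  have him : c₁.im * ‖D‖ ^ 2 = 2 * A * B * s * (s - B) := by
    rw [Complex.div_im_mul_sq_norm, hN_re, hN_im, hD_re, hD_im]
    linear_combination (-2 * A * B) * hs_sq
  refine ⟨pos_of_mul_pos_left ?_ hD_norm.le, pos_of_mul_pos_left ?_ hD_norm.le, hre, him⟩
  · rw [hre]; positivity
  · rw [him]; have := sub_pos.mpr hB_lt_s; positivity
end

section
/- Let ξ, α₁, α₂, A, B ∈ ℝ with α₂ > 0, and suppose the quantity under the square root in μ₁,₂ := (−4α₁ − ξ ∓ √(−48α₁² − 8α₁ξ − 64A² + 32α₂² + 64B² + ξ²))/8 is nonnegative. Define the 2×2 matrix P with entries P₁₁ = 12α₁³ + 2α₁²ξ + 6α₁α₂² + 4α₁A² + α₂²ξ - 4α₁B², P₂₁ = -12α₁² - 2α₁ξ - 4A² + 6α₂² + 4B², P₁₂ = α₂(α₁ξ + 4A² - 6α₂² - 4B²), P₂₂ = α₂(12α₁ + ξ). Then det P = 16 α₂ ((α₁-μ₁)² + α₂²)((α₁-μ₂)² + α₂²);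 in particular det P > 0. -/
/-!
Write `u = 12α₁² + 2α₁ξ + 4A² - 6α₂² - 4B²` and `v = 12α₁ + ξ`. Then
`P = !![α₁u + α₂²v, α₂(u - α₁v); -u, α₂v]`, so `det P = α₂ (u² + α₂² v²)`.
On the other side, `μ₁, μ₂` are the roots of `z² + (α₁ + ξ/4) z + (α₁² + α₁ξ/4 + A² - α₂²/2 - B²)`,
and `((α₁-μ₁)² + α₂²)((α₁-μ₂)² + α₂²) = |(z - μ₁)(z - μ₂)|²` at `z = α₁ + iα₂`,
whose real and imaginary parts are `u/4` and `α₂ v/4`.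
-/

open Matrix

theorem det_fin_two_of_mul_add_sq_mul {R : Type*} [CommRing R] (a b u v : R) :
    !![a * u + b ^ 2 * v, b * (u - a * v); -u, b * v].det = b * (u ^ 2 + b ^ 2 * v ^ 2) := by
  rw [det_fin_two_of]
  ring

theorem sub_sq_add_sq_mul_sub_sq_add_sq {R : Type*} [CommRing R] (x y μ₁ μ₂ : R) :
    ((x - μ₁) ^ 2 + y ^ 2) * ((x - μ₂) ^ 2 + y ^ 2) =
      (x ^ 2 - y ^ 2 - (μ₁ + μ₂) * x + μ₁ * μ₂) ^ 2 + y ^ 2 * (2 * x - (μ₁ + μ₂)) ^ 2 := by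
  ring

/-- Determinant formula for the Jacobian-type matrix `P` of the genus-2 system:
`det P = 16 α₂ ((α₁-μ₁)² + α₂²)((α₁-μ₂)² + α₂²) > 0`. -/
theorem stmt_16 (ξ α₁ α₂ A B : ℝ) (hα₂ : 0 < α₂)
    (hrad : 0 ≤ -48*α₁^2 - 8*α₁*ξ - 64*A^2 + 32*α₂^2 + 64*B^2 + ξ^2) :
    let R := Real.sqrt (-48*α₁^2 - 8*α₁*ξ - 64*A^2 + 32*α₂^2 + 64*B^2 + ξ^2)
    let μ₁ := (-4*α₁ - ξ - R) / 8
    let μ₂ := (-4*α₁ - ξ + R) / 8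
    let P : Matrix (Fin 2) (Fin 2) ℝ :=
      !![12*α₁^3 + 2*α₁^2*ξ + 6*α₁*α₂^2 + 4*α₁*A^2 + α₂^2*ξ - 4*α₁*B^2,
         α₂*(α₁*ξ + 4*A^2 - 6*α₂^2 - 4*B^2);
         -12*α₁^2 - 2*α₁*ξ - 4*A^2 + 6*α₂^2 + 4*B^2,
         α₂*(12*α₁ + ξ)]
    P.det = 16 * α₂ * ((α₁ - μ₁)^2 + α₂^2) * ((α₁ - μ₂)^2 + α₂^2) ∧ 0 < P.det := by
  intro R μ₁ μ₂ P
  set u := 12*α₁^2 + 2*α₁*ξ + 4*A^2 - 6*α₂^2 - 4*B^2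
  set v := 12*α₁ + ξ
  have hP : P = !![α₁ * u + α₂ ^ 2 * v, α₂ * (u - α₁ * v); -u, α₂ * v] := by
    ext i j
    fin_cases i <;> fin_cases j <;>
      simp only [P, u, v, Fin.zero_eta, Fin.mk_one, of_apply, cons_val_zero, cons_val_one,
        cons_val_fin_one] <;>
      ring
  have hsum : μ₁ + μ₂ = -(4*α₁ + ξ) / 4 := by simp only [μ₁, μ₂]; ring
  have hprod : μ₁ * μ₂ = α₁^2 + α₁*ξ/4 + A^2 - α₂^2/2 - B^2 := by
    simp only [μ₁, μ₂]
    linear_combination (-1/64 : ℝ) * Real.sq_sqrt hrad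
  have hdet : P.det = 16 * α₂ * ((α₁ - μ₁)^2 + α₂^2) * ((α₁ - μ₂)^2 + α₂^2) := by
    rw [hP, det_fin_two_of_mul_add_sq_mul, mul_assoc _ ((α₁ - μ₁)^2 + α₂^2),
      sub_sq_add_sq_mul_sub_sq_add_sq, hsum, hprod]
    ring
  refine ⟨hdet, ?_⟩
  rw [hdet]
  positivity
end
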